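/- For nonnegative integers M and N, with |q| < 1 and q not a root of unity, the terminating sum $\sum_{i=0}^{2N+1} \frac{(q^{M+2};q)_i (q^{-2N-1};q)_i}{(q;q)_i (q^{-2N-M-2};q)_i} (-q^{-M-1})^i$ equals 0. -/

import Mathlib

open Finset

noncomputable def qPoch (a q : ℂ) (n : ℕ) : ℂ := ∏ j ∈ Finset.range n, (1 - a * q ^ j)

noncomputable def qPochInf (a q : ℂ) : ℂ := ∏' j : ℕ, (1 - a * q ^ j)

noncomputable def phi (a b c q x : ℂ) : ℂ :=
  ∑' i : ℕ, qPoch a q i * qPoch b q i / (qPoch q q i * qPoch c q i) * x ^ i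

/-!
With `b * q ^ n = 1` and `c = b q / a`, reversing the factors of `(b; q)_i` and `(c; q)_i` turns the
`i`-th term of `₂φ₁(a, b; c; q, -q/a)` into
`(-1)^i (q; q)_n / (a; q)_n * (a; q)_i (a; q)_(n-i) / ((q; q)_i (q; q)_(n-i))`,
which is symmetric under `i ↦ n - i` except for the sign `(-1)^i`.
For odd `n = 2N + 1` the terms therefore cancel in pairs.
-/

noncomputable def phiTerm (a b c q x : ℂ) (i : ℕ) : ℂ :=
  qPoch a q i * qPoch b q i / (qPoch q q i * qPoch c q i) * x ^ i

theorem Finset.sum_range_eq_zero_of_reflect_eq_neg {M : Type*} [AddCommGroup M] {f : ℕ → M}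
    {n : ℕ} (hn : Odd n) (hf : ∀ i ≤ n, f (n - i) = -f i) :
    ∑ i ∈ range (n + 1), f i = 0 := by
  refine sum_involution (fun i _ ↦ n - i) (fun i hi ↦ ?_) (fun i _ _ ↦ ?_) (fun i _ ↦ ?_)
    (fun i hi ↦ ?_)
  · rw [hf i (Nat.lt_succ_iff.mp (mem_range.mp hi)), add_neg_cancel]
  · obtain ⟨k, rfl⟩ := hn
    omega
  · exact mem_range.mpr (by omega)
  · have := mem_range.mp hi
    omega

section qPoch

variable {a b c q : ℂ}

theorem qPoch_succ (a q : ℂ) (n : ℕ) : qPoch a q (n + 1) = qPoch a q n * (1 - a * q ^ n) :=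
  prod_range_succ _ _

theorem qPoch_ne_zero_of_le {m n : ℕ} (hn : qPoch a q n ≠ 0) (hmn : m ≤ n) : qPoch a q m ≠ 0 :=
  prod_ne_zero_iff.mpr fun j hj ↦
    prod_ne_zero_iff.mp hn j (mem_range.mpr ((mem_range.mp hj).trans_le hmn))

theorem qPoch_pow_ne_zero (hroot : ∀ n : ℕ, 0 < n → q ^ n ≠ 1) {k : ℕ} (hk : 0 < k) (n : ℕ) :
    qPoch (q ^ k) q n ≠ 0 :=
  prod_ne_zero_iff.mpr fun j _ ↦ by
    rw [← pow_add, sub_ne_zero]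
    exact (hroot (k + j) (by omega)).symm

/-- Since `c * b * q ^ (i + k - 1) = 1`, each factor `1 - c * q ^ j` of `(c; q)_i` equals
`-c * q ^ j * (1 - b * q ^ (i + k - 1 - j))`, a factor of `(b; q)_(i + k)` that `(b; q)_k` lacks. -/
theorem qPoch_mul_qPoch_eq (hq : q ≠ 0) (i : ℕ) {k : ℕ} (hcb : c * b * q ^ (i + k) = q) :
    qPoch c q i * qPoch b q k = (-c) ^ i * q ^ i.choose 2 * qPoch b q (i + k) := by
  induction i generalizing k with
  | zero => simp [qPoch]
  | succ i ih =>
    have hcb' : c * q ^ i * (b * q ^ k) = 1 :=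
      mul_left_cancel₀ hq (by linear_combination hcb)
    have := ih (k := k + 1) (by rwa [add_comm k, ← add_assoc])
    rw [qPoch_succ] at this
    rw [qPoch_succ, add_right_comm, add_assoc, Nat.choose_succ_succ', Nat.choose_one_right]
    linear_combination (-(c * q ^ i)) * this - qPoch c q i * qPoch b q k * hcb'

end qPoch

section terminating

variable {a b c q x : ℂ} {n : ℕ}

theorem phiTerm_eq (hq : q ≠ 0) (hb : b * q ^ n = 1) (hc : c * a = b * q) (hx : a * x = -q)
    (hqn : qPoch q q n ≠ 0) (han : qPoch a q n ≠ 0) {i : ℕ} (hi : i ≤ n) :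
    phiTerm a b c q x i = (-1) ^ i * (qPoch q q n / qPoch a q n) *
      (qPoch a q i * qPoch a q (n - i) / (qPoch q q i * qPoch q q (n - i))) := by
  obtain ⟨k, rfl⟩ := Nat.exists_eq_add_of_le hi
  rw [Nat.add_sub_cancel_left]
  have hB := qPoch_mul_qPoch_eq (c := b) (b := q) hq i (k := k)
    (by linear_combination q * hb)
  have hD := qPoch_mul_qPoch_eq (c := c) (b := a) hq i (k := k)
    (by linear_combination q ^ (i + k) * hc + q * hb)
  have hbx : b * x = -c := mul_right_cancel₀ hq (by linear_combination -x * hc + c * hx)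
  have hc0 : c ≠ 0 := left_ne_zero_of_mul (hc ▸ mul_ne_zero (left_ne_zero_of_mul_eq_one hb) hq)
  have hqi : qPoch q q i ≠ 0 := qPoch_ne_zero_of_le hqn (by omega)
  have hqk : qPoch q q k ≠ 0 := qPoch_ne_zero_of_le hqn (by omega)
  have hak : qPoch a q k ≠ 0 := qPoch_ne_zero_of_le han (by omega)
  have hpow : (-b) ^ i * x ^ i = (-1) ^ i * (-c) ^ i := by
    rw [← mul_pow, ← mul_pow]
    congr 1
    linear_combination -hbx
  rw [phiTerm, eq_div_of_mul_eq hqk hB, eq_div_of_mul_eq hak hD]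
  field_simp
  rw [div_eq_iff (pow_ne_zero _ (neg_ne_zero.mpr hc0))]
  linear_combination qPoch a q i * hpow

theorem phiTerm_sub_eq (hq : q ≠ 0) (hb : b * q ^ n = 1) (hc : c * a = b * q) (hx : a * x = -q)
    (hqn : qPoch q q n ≠ 0) (han : qPoch a q n ≠ 0) {i : ℕ} (hi : i ≤ n) :
    phiTerm a b c q x (n - i) = (-1) ^ n * phiTerm a b c q x i := by
  rw [phiTerm_eq hq hb hc hx hqn han hi, phiTerm_eq hq hb hc hx hqn han (Nat.sub_le n i),
    Nat.sub_sub_self hi]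
  obtain ⟨k, rfl⟩ := Nat.exists_eq_add_of_le hi
  have hsign : (-1 : ℂ) ^ k = (-1) ^ (i + k) * (-1) ^ i := by
    rw [pow_add, mul_right_comm, ← pow_add, Even.neg_one_pow ⟨i, rfl⟩, one_mul]
  rw [Nat.add_sub_cancel_left, hsign]
  ring

theorem sum_phiTerm_eq_zero (hn : Odd n) (hq : q ≠ 0) (hb : b * q ^ n = 1) (hc : c * a = b * q)
    (hx : a * x = -q) (hqn : qPoch q q n ≠ 0) (han : qPoch a q n ≠ 0) :
    ∑ i ∈ range (n + 1), phiTerm a b c q x i = 0 :=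
  sum_range_eq_zero_of_reflect_eq_neg hn fun i hi ↦ by
    rw [phiTerm_sub_eq hq hb hc hx hqn han hi, hn.neg_one_pow, neg_one_mul]

end terminating

theorem stmt_4_general (q : ℂ) (M N : ℕ) (hq0 : q ≠ 0)
    (hroot : ∀ n : ℕ, 0 < n → q ^ n ≠ 1) :
    ∑ i ∈ Finset.range (2 * N + 2),
        qPoch (q ^ (M + 2)) q i * qPoch (q ^ (-(2 * (N : ℤ) + 1))) q i /
          (qPoch q q i * qPoch (q ^ (-(2 * (N : ℤ) + M + 2))) q i) *
          (-(q ^ (-((M : ℤ) + 1)))) ^ i = 0 := by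
  have hb : q ^ (-(2 * (N : ℤ) + 1)) * q ^ (2 * N + 1) = 1 := by
    rw [← zpow_natCast, ← zpow_add₀ hq0,
      show -(2 * (N : ℤ) + 1) + ((2 * N + 1 : ℕ) : ℤ) = 0 by push_cast; ring, zpow_zero]
  have hc : q ^ (-(2 * (N : ℤ) + M + 2)) * q ^ (M + 2) = q ^ (-(2 * (N : ℤ) + 1)) * q := by
    rw [← zpow_natCast, ← zpow_add₀ hq0, ← zpow_add_one₀ hq0]
    congr 1
    push_cast
    ring
  have hx : q ^ (M + 2) * -(q ^ (-((M : ℤ) + 1))) = -q := by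
    rw [mul_neg, ← zpow_natCast, ← zpow_add₀ hq0,
      show ((M + 2 : ℕ) : ℤ) + -((M : ℤ) + 1) = 1 by push_cast; ring, zpow_one]
  have hqn : qPoch q q (2 * N + 1) ≠ 0 := by
    simpa only [pow_one] using qPoch_pow_ne_zero hroot one_pos (2 * N + 1)
  exact sum_phiTerm_eq_zero (odd_two_mul_add_one N) hq0 hb hc hx hqn
    (qPoch_pow_ne_zero hroot (by omega) _)

theorem stmt_4 (q : ℂ) (M N : ℕ) (hq : ‖q‖ < 1) (hq0 : q ≠ 0)
    (hroot : ∀ n : ℕ, 0 < n → q ^ n ≠ 1) :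
    ∑ i ∈ Finset.range (2 * N + 2),
        qPoch (q ^ (M + 2)) q i * qPoch (q ^ (-(2 * (N : ℤ) + 1))) q i /
          (qPoch q q i * qPoch (q ^ (-(2 * (N : ℤ) + M + 2))) q i) *
          (-(q ^ (-((M : ℤ) + 1)))) ^ i = 0 :=
  stmt_4_general q M N hq0 hroot
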